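/- Let T = U|T| and S = V|S| be the polar decompositions of bounded operators T, S on a complex Hilbert space H, and let TS = W|TS| be the polar decomposition of TS. Then |T|·|S^*| = (U^* W V^*) | |T|·|S^*| | is the polar decomposition of |T|·|S^*|; that is, U^* W V^* is a partial isometry and (U^* W V^*)^*(U^* W V^*) equals the orthogonal projection onto the closure of the range of | |T|·|S^*| |. -/

import Mathlib

open ContinuousLinearMap

variable {H : Type*} [NormedAddCommGroup H] [InnerProductSpace ℂ H] [CompleteSpace H]

/-- The absolute value `|T| = (T^*T)^(1/2)` of a bounded operator on a complex
Hilbert space, defined via the continuous functional calculus. -/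
noncomputable def absOp (T : H →L[ℂ] H) : H →L[ℂ] H :=
  cfc Real.sqrt (adjoint T * T)

/-- The orthogonal projection of `H` onto the closure of the range of `T`,
regarded as an operator on `H`. -/
noncomputable def rangeProjOp (T : H →L[ℂ] H) : H →L[ℂ] H :=
  (LinearMap.range (T : H →ₗ[ℂ] H)).topologicalClosure.subtypeL ∘L
    (LinearMap.range (T : H →ₗ[ℂ] H)).topologicalClosure.orthogonalProjectionOnto

/-- `U` is a partial isometry: `U^*U` is an orthogonal projection
(a self-adjoint idempotent). -/
def IsPartialIsometryOp (U : H →L[ℂ] H) : Prop :=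
  IsSelfAdjoint (adjoint U * U) ∧ (adjoint U * U) * (adjoint U * U) = adjoint U * U

/-- `T = U|T|` is the polar decomposition of `T`: `U` is a partial isometry and
`U^*U` is the orthogonal projection onto the closure of the range of `T^*`. -/
def IsPolarDecompositionOp (T U : H →L[ℂ] H) : Prop :=
  T = U * absOp T ∧ IsPartialIsometryOp U ∧ adjoint U * U = rangeProjOp (adjoint T)

/-! Since `U^*T = |T|` and `S V^* = |S^*|`, the operator `A = |T||S^*|` equals `U^*(TS)V^*`.
As `UU^*` fixes the range of `T` and `V^*V` fixes `|TS|`, this gives `A^*A = (V|TS|V^*)^2`, so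
`|A| = V|TS|V^*` and `A = (U^*WV^*)|A|`. The range of `W` lies in the closure of the range of `T`,
so `(U^*WV^*)^*(U^*WV^*) = V(W^*W)V^*`, and since `V(TS)^* = |A|VW^*` this is the projection onto
the closure of the range of `|A|`. -/

lemma adjoint_mul (A B : H →L[ℂ] H) : adjoint (A * B) = adjoint B * adjoint A :=
  adjoint_comp A B

section RangeProjection

lemma isSelfAdjoint_rangeProjOp (C : H →L[ℂ] H) : IsSelfAdjoint (rangeProjOp C) :=
  isSelfAdjoint_starProjection _

lemma rangeProjOp_mul_rangeProjOp (C : H →L[ℂ] H) :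
    rangeProjOp C * rangeProjOp C = rangeProjOp C :=
  (Submodule.isIdempotentElem_starProjection _).eq

lemma rangeProjOp_mul_self (C : H →L[ℂ] H) : rangeProjOp C * C = C := by
  ext x
  exact Submodule.starProjection_eq_self_iff.mpr
    (Submodule.le_topologicalClosure _ (LinearMap.mem_range_self _ x))

lemma mul_rangeProjOp_eq_of_mul_eq {B B' C : H →L[ℂ] H} (h : B * C = B' * C) :
    B * rangeProjOp C = B' * rangeProjOp C := by
  ext x
  have hrange : Set.range C ⊆ {y | B y = B' y} := by
    rintro _ ⟨z, rfl⟩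
    exact congr($h z)
  have hclosure := closure_minimal hrange (isClosed_eq B.continuous B'.continuous)
  refine hclosure ?_
  have hmem :=
    ((LinearMap.range (C : H →ₗ[ℂ] H)).topologicalClosure.orthogonalProjectionOnto x).2
  rwa [← SetLike.mem_coe, Submodule.topologicalClosure_coe, LinearMap.coe_range] at hmem

lemma eq_rangeProjOp_of {P C : H →L[ℂ] H} (hP : IsSelfAdjoint P) (hPC : P * C = C)
    (hCP : rangeProjOp C * P = P) : P = rangeProjOp C := by
  have hfix : P * rangeProjOp C = rangeProjOp C := by
    rw [mul_rangeProjOp_eq_of_mul_eq (B' := 1) (by rwa [one_mul]), one_mul]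
  have hle : P * rangeProjOp C = P := by
    have := congr(adjoint $hCP)
    rwa [adjoint_mul, hP.adjoint_eq, (isSelfAdjoint_rangeProjOp C).adjoint_eq] at this
  exact hle.symm.trans hfix

end RangeProjection

section AbsoluteValue

lemma absOp_eq_cfcAbs (T : H →L[ℂ] H) : absOp T = CFC.abs T := by
  rw [CFC.abs, CFC.sqrt_eq_real_sqrt _ (star_mul_self_nonneg T), cfcₙ_eq_cfc, star_eq_adjoint]
  rfl

lemma absOp_nonneg (T : H →L[ℂ] H) : 0 ≤ absOp T := by
  rw [absOp_eq_cfcAbs]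
  exact CFC.abs_nonneg T

lemma isSelfAdjoint_absOp (T : H →L[ℂ] H) : IsSelfAdjoint (absOp T) :=
  (absOp_nonneg T).isSelfAdjoint

lemma absOp_mul_absOp (T : H →L[ℂ] H) : absOp T * absOp T = adjoint T * T := by
  rw [absOp_eq_cfcAbs, CFC.abs_mul_abs, star_eq_adjoint]

lemma absOp_absOp (T : H →L[ℂ] H) : absOp (absOp T) = absOp T := by
  rw [absOp_eq_cfcAbs, absOp_eq_cfcAbs, CFC.cfcAbs_cfcAbs]

lemma absOp_eq_of_mul_self {T R : H →L[ℂ] H} (hR : 0 ≤ R) (h : R * R = adjoint T * T) :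
    absOp T = R := by
  rw [absOp_eq_cfcAbs, CFC.abs, star_eq_adjoint]
  exact CFC.sqrt_unique h hR

lemma norm_absOp_apply (T : H →L[ℂ] H) (x : H) : ‖absOp T x‖ = ‖T x‖ := by
  rw [apply_norm_eq_sqrt_inner_adjoint_left, apply_norm_eq_sqrt_inner_adjoint_left,
    (isSelfAdjoint_absOp T).adjoint_eq]
  exact congr(√(RCLike.re (inner ℂ ($(absOp_mul_absOp T) x) x)))

lemma absOp_mul_of_mul_eq_self {T R : H →L[ℂ] H} (h : T * R = T) :
    absOp T * R = absOp T := by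
  ext x
  have hker : T (R x - x) = 0 := by rw [map_sub, ← mul_apply_eq_comp, h, sub_self]
  rw [mul_apply_eq_comp, ← sub_eq_zero, ← map_sub, ← norm_eq_zero, norm_absOp_apply, hker,
    norm_zero]

lemma adjoint_mul_self_mul_absOp {C V : H →L[ℂ] H} (h : C * (adjoint V * V) = C) :
    adjoint V * V * absOp C = absOp C := by
  have := congr(adjoint $(absOp_mul_of_mul_eq_self h))
  rwa [adjoint_mul, adjoint_mul, adjoint_adjoint, (isSelfAdjoint_absOp C).adjoint_eq] at this

lemma absOp_adjoint_mul {U C : H →L[ℂ] H} (h : U * adjoint U * C = C) :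
    absOp (adjoint U * C) = absOp C := by
  rw [absOp, absOp, adjoint_mul, adjoint_adjoint, mul_assoc, ← mul_assoc U, h]

lemma absOp_mul_adjoint {C V : H →L[ℂ] H} (h : C * (adjoint V * V) = C) :
    absOp (C * adjoint V) = V * absOp C * adjoint V := by
  apply absOp_eq_of_mul_self
  · rw [← star_eq_adjoint]
    exact star_right_conjugate_nonneg (absOp_nonneg C) V
  · calc V * absOp C * adjoint V * (V * absOp C * adjoint V)
        = V * (absOp C * (adjoint V * V)) * absOp C * adjoint V := by simp only [mul_assoc]
      _ = V * (adjoint C * C) * adjoint V := by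
        rw [absOp_mul_of_mul_eq_self h, mul_assoc V, absOp_mul_absOp]
      _ = adjoint (C * adjoint V) * (C * adjoint V) := by
        rw [adjoint_mul, adjoint_adjoint]; simp only [mul_assoc]

end AbsoluteValue

lemma IsPartialIsometryOp.mul_adjoint_mul_self {U : H →L[ℂ] H} (hU : IsPartialIsometryOp U) :
    U * (adjoint U * U) = U := by
  obtain ⟨hsa, hidem⟩ := hU
  have hker : adjoint (U * (1 - adjoint U * U)) ∘L (U * (1 - adjoint U * U)) = 0 := by
    change adjoint (U * (1 - adjoint U * U)) * (U * (1 - adjoint U * U)) = 0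
    rw [adjoint_mul, map_sub, adjoint_one, hsa.adjoint_eq, mul_assoc, ← mul_assoc (adjoint U),
      mul_sub (adjoint U * U), mul_one, hidem, sub_self, mul_zero]
  have := adjoint_comp_self_eq_zero_iff.mp hker
  rwa [mul_sub, mul_one, sub_eq_zero, eq_comm] at this

namespace IsPolarDecompositionOp

variable {T U : H →L[ℂ] H}

lemma mul_adjoint_mul_self (h : IsPolarDecompositionOp T U) : T * (adjoint U * U) = T := by
  have := congr(adjoint $(rangeProjOp_mul_self (adjoint T)))
  rwa [adjoint_mul, adjoint_adjoint, (isSelfAdjoint_rangeProjOp _).adjoint_eq, ← h.2.2] at this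

lemma adjoint_mul_eq_absOp (h : IsPolarDecompositionOp T U) : adjoint U * T = absOp T := by
  conv_lhs => rw [h.1]
  rw [← mul_assoc, adjoint_mul_self_mul_absOp h.mul_adjoint_mul_self]

lemma mul_adjoint_mul (h : IsPolarDecompositionOp T U) : U * adjoint U * T = T := by
  rw [mul_assoc, h.adjoint_mul_eq_absOp, ← h.1]

lemma adjoint_eq (h : IsPolarDecompositionOp T U) : adjoint T = absOp T * adjoint U := by
  conv_lhs => rw [h.1]
  rw [adjoint_mul, (isSelfAdjoint_absOp T).adjoint_eq]

lemma absOp_adjoint (h : IsPolarDecompositionOp T U) : absOp (adjoint T) = T * adjoint U := by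
  rw [h.adjoint_eq, absOp_mul_adjoint (absOp_mul_of_mul_eq_self h.mul_adjoint_mul_self),
    absOp_absOp, ← h.1]

lemma mul_eq_self_of_mul_eq_self (h : IsPolarDecompositionOp T U) {B : H →L[ℂ] H}
    (hB : B * T = T) : B * U = U := by
  have hU : U * rangeProjOp (adjoint T) = U := by rw [← h.2.2, h.2.1.mul_adjoint_mul_self]
  have hUT : U * adjoint T = T * adjoint U := by rw [h.adjoint_eq, ← mul_assoc, ← h.1]
  calc B * U = B * U * rangeProjOp (adjoint T) := by rw [mul_assoc, hU]
    _ = 1 * U * rangeProjOp (adjoint T) :=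
      mul_rangeProjOp_eq_of_mul_eq (by rw [mul_assoc, hUT, ← mul_assoc, hB, one_mul, hUT])
    _ = U := by rw [one_mul, hU]

lemma mul_left_mul_adjoint_mul_self (h : IsPolarDecompositionOp T U) (R : H →L[ℂ] H) :
    R * T * (adjoint U * U) = R * T := by
  rw [mul_assoc, h.mul_adjoint_mul_self]

end IsPolarDecompositionOp

lemma isPartialIsometryOp_of_adjoint_mul_self_eq_rangeProjOp {X C : H →L[ℂ] H}
    (h : adjoint X * X = rangeProjOp C) : IsPartialIsometryOp X := by
  rw [IsPartialIsometryOp, h]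
  exact ⟨isSelfAdjoint_rangeProjOp C, rangeProjOp_mul_rangeProjOp C⟩

section ProductOfPolarDecompositions

variable {T S U V W : H →L[ℂ] H}

lemma absOp_mul_absOp_adjoint_eq (hT : IsPolarDecompositionOp T U)
    (hS : IsPolarDecompositionOp S V) :
    absOp T * absOp (adjoint S) = adjoint U * (T * S * adjoint V) := by
  rw [← hT.adjoint_mul_eq_absOp, hS.absOp_adjoint]
  simp only [mul_assoc]

lemma absOp_absOp_mul_absOp_adjoint (hT : IsPolarDecompositionOp T U)
    (hS : IsPolarDecompositionOp S V) :
    absOp (absOp T * absOp (adjoint S)) = V * absOp (T * S) * adjoint V := by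
  rw [absOp_mul_absOp_adjoint_eq hT hS,
    absOp_adjoint_mul (by rw [← mul_assoc, ← mul_assoc, hT.mul_adjoint_mul]),
    absOp_mul_adjoint (hS.mul_left_mul_adjoint_mul_self T)]

lemma absOp_mul_absOp_adjoint_eq_mul_absOp (hT : IsPolarDecompositionOp T U)
    (hS : IsPolarDecompositionOp S V) (hW : IsPolarDecompositionOp (T * S) W) :
    absOp T * absOp (adjoint S) =
      adjoint U * W * adjoint V * absOp (absOp T * absOp (adjoint S)) := by
  rw [absOp_absOp_mul_absOp_adjoint hT hS]
  calc absOp T * absOp (adjoint S) = adjoint U * (W * absOp (T * S)) * adjoint V := by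
        rw [absOp_mul_absOp_adjoint_eq hT hS, ← hW.1]; simp only [mul_assoc]
    _ = adjoint U * W * (adjoint V * V * absOp (T * S)) * adjoint V := by
        rw [adjoint_mul_self_mul_absOp (hS.mul_left_mul_adjoint_mul_self T)]
        simp only [mul_assoc]
    _ = _ := by simp only [mul_assoc]

lemma adjoint_mul_self_of_polarDecomposition_mul (hT : IsPolarDecompositionOp T U)
    (hW : IsPolarDecompositionOp (T * S) W) :
    adjoint (adjoint U * W * adjoint V) * (adjoint U * W * adjoint V) =
      V * (adjoint W * W) * adjoint V := by
  have hUW : U * adjoint U * W = W :=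
    hW.mul_eq_self_of_mul_eq_self (by rw [← mul_assoc, hT.mul_adjoint_mul])
  rw [adjoint_mul, adjoint_mul, adjoint_adjoint, adjoint_adjoint]
  calc V * (adjoint W * U) * (adjoint U * W * adjoint V)
      = V * (adjoint W * (U * adjoint U * W)) * adjoint V := by simp only [mul_assoc]
    _ = V * (adjoint W * W) * adjoint V := by rw [hUW]

lemma adjoint_mul_self_eq_rangeProjOp_absOp (hT : IsPolarDecompositionOp T U)
    (hS : IsPolarDecompositionOp S V) (hW : IsPolarDecompositionOp (T * S) W) :
    adjoint (adjoint U * W * adjoint V) * (adjoint U * W * adjoint V) =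
      rangeProjOp (absOp (absOp T * absOp (adjoint S))) := by
  have hTSV := hS.mul_left_mul_adjoint_mul_self T
  rw [adjoint_mul_self_of_polarDecomposition_mul hT hW, absOp_absOp_mul_absOp_adjoint hT hS]
  apply eq_rangeProjOp_of
  · exact IsSelfAdjoint.conjugate (IsSelfAdjoint.star_mul_self W) V
  · calc V * (adjoint W * W) * adjoint V * (V * absOp (T * S) * adjoint V)
        = V * (adjoint W * W * (adjoint V * V * absOp (T * S))) * adjoint V := by
          simp only [mul_assoc]
      _ = V * absOp (T * S) * adjoint V := by
        rw [adjoint_mul_self_mul_absOp hTSV, adjoint_mul_self_mul_absOp hW.mul_adjoint_mul_self]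
  · have hVTS : V * adjoint (T * S) = V * absOp (T * S) * adjoint V * (V * adjoint W) := by
      calc V * adjoint (T * S) = V * (absOp (T * S) * (adjoint V * V)) * adjoint W := by
            rw [absOp_mul_of_mul_eq_self hTSV, hW.adjoint_eq, mul_assoc]
        _ = _ := by simp only [mul_assoc]
    have hV : rangeProjOp (V * absOp (T * S) * adjoint V) * V * adjoint (T * S) =
        V * adjoint (T * S) := by
      rw [mul_assoc, hVTS, ← mul_assoc, rangeProjOp_mul_self]
    rw [hW.2.2]
    calc _ = rangeProjOp (V * absOp (T * S) * adjoint V) * V *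
          rangeProjOp (adjoint (T * S)) * adjoint V := by simp only [mul_assoc]
      _ = _ := by rw [mul_rangeProjOp_eq_of_mul_eq hV]

end ProductOfPolarDecompositions

/-- If `T = U|T|`, `S = V|S|` and `TS = W|TS|` are polar decompositions, then
`|T||S^*| = (U^* W V^*) | |T||S^*| |` is the polar decomposition of `|T||S^*|`:
`U^* W V^*` is a partial isometry and `(U^* W V^*)^*(U^* W V^*)` is the
orthogonal projection onto the closure of the range of `| |T||S^*| |`. -/
theorem polarDecomposition_absOp_mul (T S U V W : H →L[ℂ] H)
    (hT : IsPolarDecompositionOp T U) (hS : IsPolarDecompositionOp S V)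
    (hW : IsPolarDecompositionOp (T * S) W) :
    absOp T * absOp (adjoint S) =
        (adjoint U * W * adjoint V) * absOp (absOp T * absOp (adjoint S)) ∧
    IsPartialIsometryOp (adjoint U * W * adjoint V) ∧
    adjoint (adjoint U * W * adjoint V) * (adjoint U * W * adjoint V) =
        rangeProjOp (absOp (absOp T * absOp (adjoint S))) := by
  have hproj := adjoint_mul_self_eq_rangeProjOp_absOp hT hS hW
  exact ⟨absOp_mul_absOp_adjoint_eq_mul_absOp hT hS hW,
    isPartialIsometryOp_of_adjoint_mul_self_eq_rangeProjOp hproj, hproj⟩
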